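/- Let a_1, …, a_n be positive integers, let N = 18·(max_i a_i)·(∑_i a_i)³, and define p(x) = N·∑_{i=1}^n (x_i² − 1)² + (∑_{i=1}^n a_i x_i)² − 1/2. If there is no subset I ⊆ {1, …, n} with ∑_{i∈I} a_i = ∑_{j∉I} a_j, then p(x) ≥ 0 for all x ∈ ℝⁿ. -/
import Mathlib


open Finset

/-- The quartic polynomial function from the Partition reduction:
`p(x) = N·∑ᵢ (xᵢ² − 1)² + (∑ᵢ aᵢxᵢ)² − 1/2` with
`N = 18·(maxᵢ aᵢ)·(∑ᵢ aᵢ)³`. -/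
noncomputable def partitionPoly (n : ℕ) (a : Fin n → ℕ) (x : Fin n → ℝ) : ℝ :=
  ((18 * (Finset.univ.sup a) * (∑ i, a i) ^ 3 : ℕ) : ℝ) * (∑ i, ((x i) ^ 2 - 1) ^ 2) +
    (∑ i, (a i : ℝ) * x i) ^ 2 - 1 / 2

theorem partition_infeasible_implies_nonneg {n : ℕ} (a : Fin n → ℕ)
    (ha : ∀ i, 0 < a i)
    (hinf : ¬ ∃ I : Finset (Fin n), ∑ i ∈ I, a i = ∑ i ∈ Iᶜ, a i) :
    ∀ x : Fin n → ℝ, 0 ≤ partitionPoly n a x := by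
  classical
  intro x
  rcases Nat.eq_zero_or_pos n with hn | hn
  · subst hn
    exact absurd ⟨∅, by simp⟩ hinf
  obtain ⟨i0⟩ := Fin.pos_iff_nonempty.mp hn
  simp only [partitionPoly]
  set S : ℝ := ∑ i, (a i : ℝ) with hS
  have haR : ∀ i, (1:ℝ) ≤ (a i : ℝ) := fun i => by exact_mod_cast ha i
  have hS1 : (1:ℝ) ≤ S := by
    calc (1:ℝ) ≤ (a i0 : ℝ) := haR i0
    _ ≤ S := Finset.single_le_sum (f := fun i => ((a i : ℕ) : ℝ)) (fun i _ => by positivity) (mem_univ i0)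
  set Nn : ℕ := 18 * (Finset.univ.sup a) * (∑ i, a i) ^ 3 with hNn
  clear_value Nn
  have hM1 : 1 ≤ Finset.univ.sup a := le_trans (ha i0) (Finset.le_sup (mem_univ i0))
  have hSn : S = ((∑ i, a i : ℕ) : ℝ) := by push_cast; rfl
  have hNr : (Nn : ℝ) = 18 * ((Finset.univ.sup a : ℕ) : ℝ) * S ^ 3 := by
    rw [hNn, hSn]
    push_cast
    ring
  have hN2 : 2 * S ^ 2 ≤ (Nn : ℝ) := by
    have hM1' : (1:ℝ) ≤ ((Finset.univ.sup a : ℕ) : ℝ) := by exact_mod_cast hM1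
    have h0 : 0 ≤ S := by linarith
    have h1 : 2 * S ^ 2 ≤ 18 * S ^ 3 := by nlinarith [mul_nonneg (sq_nonneg S) (by linarith : (0:ℝ) ≤ 9 * S - 1)]
    have h2 : 18 * S ^ 3 ≤ 18 * ((Finset.univ.sup a : ℕ) : ℝ) * S ^ 3 := by
      nlinarith [pow_nonneg h0 3]
    linarith [hNr ▸ (h1.trans h2)]
  -- sign vector
  set s : Fin n → ℝ := fun i => if x i < 0 then -1 else 1 with hs
  set I : Finset (Fin n) := univ.filter (fun i => x i < 0) with hI
  set A : ℕ := ∑ i ∈ I, a i with hA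
  set B : ℕ := ∑ i ∈ Iᶜ, a i with hB
  set T : ℝ := ∑ i, (a i : ℝ) * s i with hT
  have hTval : T = (B : ℝ) - (A : ℝ) := by
    rw [hT, ← Finset.sum_filter_add_sum_filter_not univ (fun i => x i < 0)]
    have h1 : ∑ i ∈ univ.filter (fun i => x i < 0), (a i : ℝ) * s i = -(A : ℝ) := by
      rw [hA]
      push_cast
      rw [← Finset.sum_neg_distrib]
      refine Finset.sum_congr rfl fun i hi => ?_
      have : x i < 0 := (Finset.mem_filter.mp hi).2
      simp [hs, this]
    have h2 : ∑ i ∈ univ.filter (fun i => ¬ x i < 0), (a i : ℝ) * s i = (B : ℝ) := by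
      have : Iᶜ = univ.filter (fun i => ¬ x i < 0) := by
        ext i; simp [hI]
      rw [hB, this]
      push_cast
      refine Finset.sum_congr rfl fun i hi => ?_
      have : ¬ x i < 0 := (Finset.mem_filter.mp hi).2
      simp [hs, this]
    rw [h1, h2]; ring
  have hAB : A ≠ B := fun h => hinf ⟨I, h⟩
  have hT1 : 1 ≤ |T| := by
    rw [hTval]
    rcases lt_or_gt_of_ne hAB with h | h
    · have : (A : ℝ) + 1 ≤ (B : ℝ) := by exact_mod_cast h
      rw [abs_of_nonneg (by linarith)]; linarith
    · have : (B : ℝ) + 1 ≤ (A : ℝ) := by exact_mod_cast h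
      rw [abs_of_nonpos (by linarith)]; linarith
  set E : ℝ := ∑ i, ((x i) ^ 2 - 1) ^ 2 with hE
  have hE0 : 0 ≤ E := Finset.sum_nonneg fun i _ => sq_nonneg _
  set t : ℝ := Real.sqrt E with ht
  have ht0 : 0 ≤ t := Real.sqrt_nonneg _
  have ht2 : t ^ 2 = E := Real.sq_sqrt hE0
  set L : ℝ := ∑ i, (a i : ℝ) * x i with hL
  -- per-coordinate bound
  have hcoord : ∀ i, |x i - s i| ≤ |(x i) ^ 2 - 1| := by
    intro i
    have hfac : (x i) ^ 2 - 1 = (x i - s i) * (x i + s i) := by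
      by_cases h : x i < 0 <;> simp [hs, h] <;> ring
    rw [hfac, abs_mul]
    have h1 : (1:ℝ) ≤ |x i + s i| := by
      by_cases h : x i < 0
      · simp only [hs, if_pos h]
        rw [abs_of_nonpos (by linarith)]; linarith
      · simp only [hs, if_neg h]
        rw [abs_of_nonneg (by linarith [not_lt.mp h])]; linarith [not_lt.mp h]
    exact le_mul_of_one_le_right (abs_nonneg _) h1
  -- Cauchy-Schwarz bound
  have hCS : ∑ i, (a i : ℝ) * |(x i) ^ 2 - 1| ≤ S * t := by
    have h1 : (∑ i, (a i : ℝ) * |(x i) ^ 2 - 1|) ^ 2 ≤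
        (∑ i, ((a i : ℝ)) ^ 2) * ∑ i, |(x i) ^ 2 - 1| ^ 2 :=
      Finset.sum_mul_sq_le_sq_mul_sq univ _ _
    have h2 : ∑ i, |(x i) ^ 2 - 1| ^ 2 = E := by
      rw [hE]; exact Finset.sum_congr rfl fun i _ => sq_abs _
    have h3 : ∑ i, ((a i : ℝ)) ^ 2 ≤ S ^ 2 :=
      Finset.sum_sq_le_sq_sum_of_nonneg fun i _ => by positivity
    have h4 : (∑ i, (a i : ℝ) * |(x i) ^ 2 - 1|) ^ 2 ≤ (S * t) ^ 2 := by
      calc (∑ i, (a i : ℝ) * |(x i) ^ 2 - 1|) ^ 2 ≤ S ^ 2 * E := by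
            rw [h2] at h1
            exact h1.trans (mul_le_mul_of_nonneg_right h3 hE0)
      _ = (S * t) ^ 2 := by rw [mul_pow, ht2]
    have hc0 : 0 ≤ ∑ i, (a i : ℝ) * |(x i) ^ 2 - 1| :=
      Finset.sum_nonneg fun i _ => mul_nonneg (by positivity) (abs_nonneg _)
    have hSt0 : 0 ≤ S * t := mul_nonneg (by linarith) ht0
    exact (pow_le_pow_iff_left₀ hc0 hSt0 two_ne_zero).mp h4
  have hLT : |L - T| ≤ S * t := by
    have h1 : L - T = ∑ i, (a i : ℝ) * (x i - s i) := by
      rw [hL, hT, ← Finset.sum_sub_distrib]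
      exact Finset.sum_congr rfl fun i _ => by ring
    rw [h1]
    calc |∑ i, (a i : ℝ) * (x i - s i)| ≤ ∑ i, |(a i : ℝ) * (x i - s i)| :=
          Finset.abs_sum_le_sum_abs _ _
    _ ≤ ∑ i, (a i : ℝ) * |(x i) ^ 2 - 1| := by
          refine Finset.sum_le_sum fun i _ => ?_
          rw [abs_mul, abs_of_nonneg (by positivity : (0:ℝ) ≤ (a i : ℝ))]
          exact mul_le_mul_of_nonneg_left (hcoord i) (by positivity)
    _ ≤ S * t := hCS
  have hLlow : 1 - S * t ≤ |L| := by
    have := abs_sub_abs_le_abs_sub T L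
    rw [abs_sub_comm] at hLT
    linarith
  clear_value S s I A B T E t L
  clear hinf ha haR hSn hNr hNn hM1 hcoord hCS hLT hTval hT1 hAB hs hI hA hB hT hE ht hL hS
  have hgoal : (0:ℝ) ≤ (Nn : ℝ) * E + L ^ 2 - 1 / 2 := by
    by_cases hc : S * t ≤ 1
    · have h1 : (1 - S * t) ^ 2 ≤ L ^ 2 := by
        rw [← sq_abs L]
        exact pow_le_pow_left₀ (by linarith) hLlow 2
      have hNpos : (0:ℝ) < (Nn : ℝ) := by nlinarith [sq_nonneg S]
      have key : 1 / 2 ≤ (Nn : ℝ) * t ^ 2 + (1 - S * t) ^ 2 := by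
        nlinarith [sq_nonneg ((Nn : ℝ) * t - S), hN2, hNpos,
          mul_nonneg hNpos.le (sq_nonneg (S * t))]
      rw [← ht2]
      nlinarith [key, h1]
    · push_neg at hc
      have h2 : 2 * S ^ 2 * t ^ 2 ≤ (Nn : ℝ) * t ^ 2 :=
        mul_le_mul_of_nonneg_right hN2 (sq_nonneg t)
      rw [← ht2]
      nlinarith [sq_nonneg L, h2, sq_nonneg (S * t - 1), hc]
  exact hgoal
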